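/- arXiv:2006.14192 — 4 statements merged into one kernel-verified Lean document; each statement's English description precedes it below -/
import Mathlib

section
/- Let g : ℝ → ℝ be continuous with support contained in [r_m, r_M]. Then for every natural number l and every scattering angle ω ∈ (π/2, π), setting p = R/sin ω, the angular integral reduces to a generalized Abel integral: 2π ∫₀^{2ω−π} r^ω(γ) (sin γ / sin ω) · g(r^ω(γ)) · P_l(cos γ) dγ = ∫_{r_m}^{p} g(r) · K_l(p,r) / √(p − r) dr. -/
noncomputable section
open Real MeasureTheory

/-- Legendre polynomial of degree `l` (Rodrigues' formula). -/
def legP (l : ℕ) (x : ℝ) : ℝ :=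
  (1 / (2 ^ l * Nat.factorial l : ℝ)) * iteratedDeriv l (fun y : ℝ => (y ^ 2 - 1) ^ l) x
/-- The kernel `K_l` in its trigonometric form. -/
def Ktrig (R : ℝ) (l : ℕ) (p r : ℝ) : ℝ :=
  (2 * π / R) * ∑ σ ∈ ({-1, 1} : Finset ℝ),
    σ ^ l * (p * r * Real.sin (Real.arcsin (r / p) - σ * Real.arcsin (R / p)) / Real.sqrt (p + r)) *
      legP l (Real.cos (Real.arcsin (R / p) - σ * Real.arcsin (r / p)))

/-- The radial part `r^ω(γ) = R sin(ω - γ)/sin ω`. -/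
def rr (R ω γ : ℝ) : ℝ := R * Real.sin (ω - γ) / Real.sin ω

lemma legP_continuous (l : ℕ) : Continuous (legP l) := by
  have hcd : ContDiff ℝ (⊤ : ℕ∞) (fun y : ℝ => (y ^ 2 - 1) ^ l) :=
    ((contDiff_id.pow 2).sub contDiff_const).pow l
  exact continuous_const.mul (hcd.continuous_iteratedDeriv l (mod_cast le_top))

lemma legP_neg (l : ℕ) (x : ℝ) : legP l (-x) = (-1) ^ l * legP l x := by
  have h : (fun y : ℝ => ((-y) ^ 2 - 1) ^ l) = (fun y : ℝ => (y ^ 2 - 1) ^ l) := by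
    funext y; rw [neg_pow, neg_one_sq, one_mul]
  have h2 := iteratedDeriv_comp_neg l (fun y : ℝ => (y ^ 2 - 1) ^ l) x
  rw [h] at h2
  unfold legP
  rw [h2, smul_eq_mul]
  have e1 : ((-1:ℝ)) ^ l * ((-1:ℝ)) ^ l = 1 := by rw [← mul_pow]; norm_num
  set c := (1 / (2 ^ l * Nat.factorial l : ℝ)) with hc
  set A := iteratedDeriv l (fun y : ℝ => (y ^ 2 - 1) ^ l) (-x) with hA
  calc c * A = ((-1:ℝ) ^ l * (-1:ℝ) ^ l) * (c * A) := by rw [e1, one_mul]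
    _ = (-1) ^ l * (c * ((-1) ^ l * A)) := by ring

/-- One of the two summands of `Ktrig`, divided by `√(p-r)` and multiplied by `g r`. -/
def Fa (R : ℝ) (g : ℝ → ℝ) (l : ℕ) (p σ r : ℝ) : ℝ :=
  g r * ((2 * π / R) *
    (σ ^ l * (p * r * Real.sin (Real.arcsin (r / p) - σ * Real.arcsin (R / p)) / Real.sqrt (p + r)) *
      legP l (Real.cos (Real.arcsin (R / p) - σ * Real.arcsin (r / p))))) / Real.sqrt (p - r)

lemma Ktrig_split (R : ℝ) (g : ℝ → ℝ) (l : ℕ) (p r : ℝ) :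
    g r * Ktrig R l p r / Real.sqrt (p - r) = Fa R g l p 1 r + Fa R g l p (-1) r := by
  unfold Ktrig Fa
  rw [show ({-1, 1} : Finset ℝ) = insert (-1 : ℝ) {1} from rfl,
    Finset.sum_insert (by norm_num), Finset.sum_singleton]
  ring

set_option maxHeartbeats 2000000 in
/-- Reduction of the angular integral to a generalized Abel integral with `p = R / sin ω`. -/
theorem angular_integral_as_abel_integral
    (R rm rM : ℝ) (hR : 0 < R) (hRm : R < rm) (hmM : rm < rM)
    (g : ℝ → ℝ) (hg : Continuous g) (hsupp : Function.support g ⊆ Set.Icc rm rM)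
    (l : ℕ) (ω : ℝ) (hω : ω ∈ Set.Ioo (π / 2) π)
    (p : ℝ) (hp : p = R / Real.sin ω) :
    2 * π * (∫ γ in (0:ℝ)..(2 * ω - π),
        rr R ω γ * (Real.sin γ / Real.sin ω) * g (rr R ω γ) * legP l (Real.cos γ))
      = ∫ r in rm..p, g r * Ktrig R l p r / Real.sqrt (p - r) := by
  obtain ⟨hω1, hω2⟩ := hω
  have hπ : (0:ℝ) < π := Real.pi_pos
  have hω0 : 0 < ω := by linarith
  have hsω : 0 < Real.sin ω := Real.sin_pos_of_pos_of_lt_pi hω0 hω2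
  have sinlt : ∀ x y : ℝ, -(π/2) ≤ x → y ≤ π/2 → x < y → Real.sin x < Real.sin y :=
    fun x y hx hy hxy => Real.strictMonoOn_sin ⟨hx, by linarith⟩ ⟨by linarith, hy⟩ hxy
  have hsω1 : Real.sin ω < 1 := by
    have h := sinlt (π - ω) (π / 2) (by linarith) (le_refl _) (by linarith)
    rw [Real.sin_pi_sub, Real.sin_pi_div_two] at h
    exact h
  have hp0 : 0 < p := by rw [hp]; positivity
  have hp0' : p ≠ 0 := ne_of_gt hp0
  have hR0 : R ≠ 0 := ne_of_gt hR
  have hsω0 : Real.sin ω ≠ 0 := ne_of_gt hsω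
  have hRp : R < p := by
    rw [hp, lt_div_iff₀ hsω]; nlinarith
  have hRps : R / p = Real.sin ω := by rw [hp]; field_simp
  have harcR : Real.arcsin (R / p) = π - ω := by
    rw [hRps, ← Real.sin_pi_sub, Real.arcsin_sin (by linarith) (by linarith)]
  set φ : ℝ → ℝ := fun γ => p * Real.sin (ω - γ) with hφ
  set φ' : ℝ → ℝ := fun γ => p * (Real.cos (ω - γ) * (-1)) with hφ'
  have hder : ∀ (γ : ℝ) (s : Set ℝ), HasDerivWithinAt φ (φ' γ) s γ := by
    intro γ s
    exact (((Real.hasDerivAt_sin (ω - γ)).comp γ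
      ((hasDerivAt_id γ).const_sub ω)).const_mul p).hasDerivWithinAt
  have hrrφ : ∀ γ : ℝ, rr R ω γ = φ γ := by
    intro γ
    show R * Real.sin (ω - γ) / Real.sin ω = p * Real.sin (ω - γ)
    rw [hp]; field_simp
  set s₁ : Set ℝ := Set.Ioo 0 (ω - π / 2) with hs₁
  set s₂ : Set ℝ := Set.Ioo (ω - π / 2) (2 * ω - π) with hs₂
  have meas1 : MeasurableSet s₁ := measurableSet_Ioo
  have meas2 : MeasurableSet s₂ := measurableSet_Ioo
  have hmem1 : ∀ γ ∈ s₁, φ γ ∈ Set.Ioo R p := by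
    rintro γ ⟨h1, h2⟩
    have hlt : Real.sin ω < Real.sin (ω - γ) := by
      rw [← Real.sin_pi_sub ω, ← Real.sin_pi_sub (ω - γ)]
      exact sinlt _ _ (by linarith) (by linarith) (by linarith)
    have hlt1 : Real.sin (ω - γ) < 1 := by
      have h := sinlt (π - (ω - γ)) (π / 2) (by linarith) (le_refl _) (by linarith)
      rw [Real.sin_pi_sub, Real.sin_pi_div_two] at h
      exact h
    have hRe : R = p * Real.sin ω := by rw [hp]; field_simp
    refine ⟨?_, ?_⟩
    · show R < p * Real.sin (ω - γ)
      nlinarith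
    · show p * Real.sin (ω - γ) < p
      nlinarith
  have hmem2 : ∀ γ ∈ s₂, φ γ ∈ Set.Ioo R p := by
    rintro γ ⟨h1, h2⟩
    have hlt : Real.sin ω < Real.sin (ω - γ) := by
      rw [← Real.sin_pi_sub ω]
      exact sinlt _ _ (by linarith) (by linarith) (by linarith)
    have hlt1 : Real.sin (ω - γ) < 1 := by
      have h := sinlt (ω - γ) (π / 2) (by linarith) (le_refl _) (by linarith)
      rw [Real.sin_pi_div_two] at h
      exact h
    have hRe : R = p * Real.sin ω := by rw [hp]; field_simp
    constructor
    · show R < p * Real.sin (ω - γ)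
      nlinarith
    · show p * Real.sin (ω - γ) < p
      nlinarith
  have hinj1 : Set.InjOn φ s₁ := by
    rintro x ⟨hx1, hx2⟩ y ⟨hy1, hy2⟩ hxy
    have h1 : Real.sin (π - (ω - x)) = Real.sin (π - (ω - y)) := by
      rw [Real.sin_pi_sub, Real.sin_pi_sub]
      exact mul_left_cancel₀ hp0' hxy
    have h2 := Real.injOn_sin ⟨by linarith, by linarith⟩ ⟨by linarith, by linarith⟩ h1
    linarith
  have hinj2 : Set.InjOn φ s₂ := by
    rintro x ⟨hx1, hx2⟩ y ⟨hy1, hy2⟩ hxy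
    have h1 : Real.sin (ω - x) = Real.sin (ω - y) := mul_left_cancel₀ hp0' hxy
    have h2 := Real.injOn_sin ⟨by linarith, by linarith⟩ ⟨by linarith, by linarith⟩ h1
    linarith
  have himg1 : φ '' s₁ = Set.Ioo R p := by
    apply Set.Subset.antisymm
    · rintro r ⟨γ, hγ, rfl⟩; exact hmem1 γ hγ
    · rintro r ⟨hr1, hr2⟩
      have hr0 : 0 < r := lt_trans hR hr1
      have hrp1 : r / p < 1 := (div_lt_one hp0).2 hr2
      have hrp0 : 0 < r / p := div_pos hr0 hp0
      have hrpR : R / p < r / p := by gcongr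
      have harc1 : π - ω < Real.arcsin (r / p) := by
        rw [← harcR]
        exact Real.strictMonoOn_arcsin ⟨by nlinarith [hRps], by nlinarith [hRps]⟩
          ⟨by linarith, hrp1.le⟩ hrpR
      have harc2 : Real.arcsin (r / p) < π / 2 := Real.arcsin_lt_pi_div_two.2 hrp1
      refine ⟨ω - π + Real.arcsin (r / p), ⟨by linarith, by linarith⟩, ?_⟩
      show p * Real.sin (ω - (ω - π + Real.arcsin (r / p))) = r
      rw [show ω - (ω - π + Real.arcsin (r / p)) = π - Real.arcsin (r / p) by ring,
        Real.sin_pi_sub, Real.sin_arcsin (by linarith) hrp1.le]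
      field_simp
  have himg2 : φ '' s₂ = Set.Ioo R p := by
    apply Set.Subset.antisymm
    · rintro r ⟨γ, hγ, rfl⟩; exact hmem2 γ hγ
    · rintro r ⟨hr1, hr2⟩
      have hr0 : 0 < r := lt_trans hR hr1
      have hrp1 : r / p < 1 := (div_lt_one hp0).2 hr2
      have hrp0 : 0 < r / p := div_pos hr0 hp0
      have hrpR : R / p < r / p := by gcongr
      have harc1 : π - ω < Real.arcsin (r / p) := by
        rw [← harcR]
        exact Real.strictMonoOn_arcsin ⟨by nlinarith [hRps], by nlinarith [hRps]⟩
          ⟨by linarith, hrp1.le⟩ hrpR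
      have harc2 : Real.arcsin (r / p) < π / 2 := Real.arcsin_lt_pi_div_two.2 hrp1
      refine ⟨ω - Real.arcsin (r / p), ⟨by linarith, by linarith⟩, ?_⟩
      show p * Real.sin (ω - (ω - Real.arcsin (r / p))) = r
      rw [show ω - (ω - Real.arcsin (r / p)) = Real.arcsin (r / p) by ring,
        Real.sin_arcsin (by linarith) hrp1.le]
      field_simp
  have habs : ∀ γ : ℝ, φ γ ∈ Set.Ioo R p →
      |φ' γ| = Real.sqrt (p - φ γ) * Real.sqrt (p + φ γ) := by
    rintro γ ⟨h1, h2⟩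
    have hc := Real.sin_sq_add_cos_sq (ω - γ)
    have hnn : 0 ≤ p - φ γ := by linarith
    have hnn2 : 0 ≤ p + φ γ := by nlinarith
    rw [← Real.sqrt_mul hnn]
    have hsq : (p - φ γ) * (p + φ γ) = (p * Real.cos (ω - γ)) ^ 2 := by
      show (p - p * Real.sin (ω - γ)) * (p + p * Real.sin (ω - γ)) = _
      linear_combination (-(p ^ 2)) * hc
    rw [hsq, Real.sqrt_sq_eq_abs]
    show |p * (Real.cos (ω - γ) * (-1))| = |p * Real.cos (ω - γ)|
    rw [abs_mul, abs_mul, abs_mul (p), abs_neg, abs_one, mul_one]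
  set I : ℝ → ℝ := fun γ => rr R ω γ * (Real.sin γ / Real.sin ω) * g (rr R ω γ) * legP l (Real.cos γ) with hIdef
  have hIcont : Continuous I := by
    have hrrc : Continuous (fun γ => rr R ω γ) := by unfold rr; fun_prop
    exact ((hrrc.mul (Real.continuous_sin.div_const _)).mul (hg.comp hrrc)).mul
      ((legP_continuous l).comp Real.continuous_cos)
  have hkey1 : ∀ γ ∈ s₁, |φ' γ| * Fa R g l p 1 (φ γ) = 2 * π * I γ := by
    rintro γ ⟨hg1, hg2⟩
    obtain ⟨hr1, hr2⟩ := hmem1 γ ⟨hg1, hg2⟩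
    have hrP : φ γ / p = Real.sin (ω - γ) := by
      show p * Real.sin (ω - γ) / p = _
      field_simp
    have harc_r : Real.arcsin (φ γ / p) = π - (ω - γ) := by
      rw [hrP, ← Real.sin_pi_sub, Real.arcsin_sin (by linarith) (by linarith)]
    have h1 : Real.sqrt (p - φ γ) ≠ 0 := ne_of_gt (Real.sqrt_pos.2 (by linarith))
    have h2 : Real.sqrt (p + φ γ) ≠ 0 := ne_of_gt (Real.sqrt_pos.2 (by nlinarith))
    unfold Fa
    rw [harc_r, harcR,
      show π - (ω - γ) - 1 * (π - ω) = γ by ring,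
      show π - ω - 1 * (π - (ω - γ)) = -γ by ring,
      Real.cos_neg, habs γ ⟨hr1, hr2⟩]
    simp only [hIdef]
    rw [hrrφ γ, ← hRps]
    field_simp
    ring
  have hkey2 : ∀ γ ∈ s₂, |φ' γ| * Fa R g l p (-1) (φ γ) = 2 * π * I γ := by
    rintro γ ⟨hg1, hg2⟩
    obtain ⟨hr1, hr2⟩ := hmem2 γ ⟨hg1, hg2⟩
    have hrP : φ γ / p = Real.sin (ω - γ) := by
      show p * Real.sin (ω - γ) / p = _
      field_simp
    have harc_r : Real.arcsin (φ γ / p) = ω - γ := by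
      rw [hrP, Real.arcsin_sin (by linarith) (by linarith)]
    have h1 : Real.sqrt (p - φ γ) ≠ 0 := ne_of_gt (Real.sqrt_pos.2 (by linarith))
    have h2 : Real.sqrt (p + φ γ) ≠ 0 := ne_of_gt (Real.sqrt_pos.2 (by nlinarith))
    have hmm : ∀ A B : ℝ, (-1:ℝ) ^ l * A * ((-1:ℝ) ^ l * B) = A * B := by
      intro A B
      have e1 : ((-1:ℝ)) ^ l * ((-1:ℝ)) ^ l = 1 := by rw [← mul_pow]; norm_num
      calc (-1:ℝ) ^ l * A * ((-1:ℝ) ^ l * B) = ((-1:ℝ) ^ l * (-1:ℝ) ^ l) * (A * B) := by ring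
        _ = A * B := by rw [e1, one_mul]
    unfold Fa
    rw [harc_r, harcR,
      show ω - γ - (-1) * (π - ω) = π - γ by ring,
      show π - ω - (-1) * (ω - γ) = π - γ by ring,
      Real.sin_pi_sub, Real.cos_pi_sub, legP_neg, hmm,
      habs γ ⟨hr1, hr2⟩]
    simp only [hIdef]
    rw [hrrφ γ, ← hRps]
    field_simp
  have int1 : ∫ r in Set.Ioo R p, Fa R g l p 1 r = ∫ γ in s₁, 2 * π * I γ := by
    rw [← himg1, integral_image_eq_integral_abs_deriv_smul meas1 (fun x _ => hder x s₁) hinj1]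
    apply setIntegral_congr_fun meas1
    intro γ hγ
    simp only [smul_eq_mul]
    exact hkey1 γ hγ
  have int2 : ∫ r in Set.Ioo R p, Fa R g l p (-1) r = ∫ γ in s₂, 2 * π * I γ := by
    rw [← himg2, integral_image_eq_integral_abs_deriv_smul meas2 (fun x _ => hder x s₂) hinj2]
    apply setIntegral_congr_fun meas2
    intro γ hγ
    simp only [smul_eq_mul]
    exact hkey2 γ hγ
  have hIint : IntegrableOn (fun γ => 2 * π * I γ) (Set.Ioo 0 (ω - π/2)) := by
    exact ((continuous_const.mul hIcont).integrableOn_Icc).mono_set Set.Ioo_subset_Icc_self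
  have hIint2 : IntegrableOn (fun γ => 2 * π * I γ) (Set.Ioo (ω - π/2) (2*ω - π)) := by
    exact ((continuous_const.mul hIcont).integrableOn_Icc).mono_set Set.Ioo_subset_Icc_self
  have intg1 : IntegrableOn (Fa R g l p 1) (Set.Ioo R p) := by
    rw [← himg1, integrableOn_image_iff_integrableOn_abs_deriv_smul meas1
      (fun x _ => hder x s₁) hinj1]
    apply hIint.congr_fun ?_ meas1
    intro γ hγ
    simp only [smul_eq_mul]
    exact (hkey1 γ hγ).symm
  have intg2 : IntegrableOn (Fa R g l p (-1)) (Set.Ioo R p) := by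
    rw [← himg2, integrableOn_image_iff_integrableOn_abs_deriv_smul meas2
      (fun x _ => hder x s₂) hinj2]
    apply hIint2.congr_fun ?_ meas2
    intro γ hγ
    simp only [smul_eq_mul]
    exact (hkey2 γ hγ).symm
  have hmain : 2 * π * (∫ γ in (0:ℝ)..(2 * ω - π), I γ)
      = ∫ r in Set.Ioo R p, g r * Ktrig R l p r / Real.sqrt (p - r) := by
    rw [← intervalIntegral.integral_add_adjacent_intervals (a := (0:ℝ)) (b := ω - π/2)
      (c := 2 * ω - π) (hIcont.intervalIntegrable _ _) (hIcont.intervalIntegrable _ _)]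
    rw [mul_add]
    rw [← intervalIntegral.integral_const_mul, ← intervalIntegral.integral_const_mul]
    rw [intervalIntegral.integral_of_le (by linarith), intervalIntegral.integral_of_le (by linarith)]
    rw [integral_Ioc_eq_integral_Ioo, integral_Ioc_eq_integral_Ioo]
    rw [← int1, ← int2, ← integral_add intg1 intg2]
    apply setIntegral_congr_fun measurableSet_Ioo
    intro r _
    exact (Ktrig_split R g l p r).symm
  have hzero : ∀ r : ℝ, r < rm → g r = 0 := by
    intro r hr
    by_contra h
    exact absurd (hsupp (Function.mem_support.2 h)).1 (not_le.2 hr)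
  rw [hmain]
  rcases le_or_gt rm p with hcase | hcase
  · rw [intervalIntegral.integral_of_le hcase, integral_Ioc_eq_integral_Ioo]
    apply setIntegral_eq_of_subset_of_ae_diff_eq_zero measurableSet_Ioo.nullMeasurableSet
      (Set.Ioo_subset_Ioo (le_of_lt hRm) (le_refl p))
    have h1 : ∀ᵐ (x : ℝ), x ≠ rm := by
      rw [ae_iff]
      simpa using measure_singleton rm
    filter_upwards [h1] with x hx hxd
    obtain ⟨⟨hx1, hx2⟩, hx3⟩ := hxd
    have : x ≤ rm := by
      by_contra h
      exact hx3 ⟨lt_of_not_ge h, hx2⟩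
    have hxlt : x < rm := lt_of_le_of_ne this hx
    rw [hzero x hxlt]
    simp
  · have hL : ∫ r in Set.Ioo R p, g r * Ktrig R l p r / Real.sqrt (p - r) = 0 := by
      apply setIntegral_eq_zero_of_forall_eq_zero
      intro x hx
      rw [hzero x (lt_trans hx.2 hcase)]
      simp
    have hRz : (∫ r in rm..p, g r * Ktrig R l p r / Real.sqrt (p - r)) = 0 := by
      rw [intervalIntegral.integral_of_ge hcase.le]
      rw [setIntegral_eq_zero_of_forall_eq_zero, neg_zero]
      intro x hx
      rw [Real.sqrt_eq_zero'.mpr (by linarith [hx.1] : p - x ≤ 0), div_zero]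
    rw [hL, hRz]
end
end

section
/- For every natural number l and all real p, r with 0 < R < r ≤ p, the kernel admits the algebraic form: (2π/R) Σ_{σ∈{−1,+1}} σ^l · [p r sin(arcsin(r/p) − σ arcsin(R/p)) / √(p+r)] · P_l(cos(arcsin(R/p) − σ arcsin(r/p))) = Σ_{σ∈{−1,+1}} σ^l · (Q1(p,r) − σ Q2(p,r) √(p−r)) · P_l(Q3(p,r) √(p−r) + σ Q4(p,r)). -/
noncomputable section
open Real MeasureTheory

def Q1 (R p r : ℝ) : ℝ := 2 * π * r ^ 2 * Real.sqrt (p ^ 2 - R ^ 2) / (R * p * Real.sqrt (p + r))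
def Q2 (p r : ℝ) : ℝ := 2 * π * r / p
def Q3 (R p r : ℝ) : ℝ := Real.sqrt (p ^ 2 - R ^ 2) * Real.sqrt (p + r) / p ^ 2
def Q4 (R p r : ℝ) : ℝ := R * r / p ^ 2

/-- The kernel `K_l` in its algebraic form. -/
def Kalg (R : ℝ) (l : ℕ) (p r : ℝ) : ℝ :=
  ∑ σ ∈ ({-1, 1} : Finset ℝ),
    σ ^ l * (Q1 R p r - σ * Q2 p r * Real.sqrt (p - r)) *
      legP l (Q3 R p r * Real.sqrt (p - r) + σ * Q4 R p r)

/-- The trigonometric form of the kernel equals its algebraic form. -/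
theorem kernel_algebraic_form
    (R : ℝ) (hR : 0 < R) (l : ℕ) (p r : ℝ) (hRr : R < r) (hrp : r ≤ p) :
    (2 * π / R) * (∑ σ ∈ ({-1, 1} : Finset ℝ),
        σ ^ l *
          (p * r * Real.sin (Real.arcsin (r / p) - σ * Real.arcsin (R / p)) /
            Real.sqrt (p + r)) *
          legP l (Real.cos (Real.arcsin (R / p) - σ * Real.arcsin (r / p))))
      = ∑ σ ∈ ({-1, 1} : Finset ℝ),
          σ ^ l * (Q1 R p r - σ * Q2 p r * Real.sqrt (p - r)) *
            legP l (Q3 R p r * Real.sqrt (p - r) + σ * Q4 R p r) := by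
  have hp : 0 < p := lt_of_lt_of_le (hR.trans hRr) hrp
  have hRp : R ≤ p := le_of_lt (lt_of_lt_of_le hRr hrp)
  have hpr : (0:ℝ) < p + r := by linarith
  have hpr' : (0:ℝ) ≤ p - r := by linarith
  have hsR : (0:ℝ) ≤ p ^ 2 - R ^ 2 := by nlinarith
  have hsr : (0:ℝ) ≤ p ^ 2 - r ^ 2 := by nlinarith
  have ha : Real.sin (Real.arcsin (R / p)) = R / p :=
    Real.sin_arcsin ((by norm_num : (-1:ℝ) ≤ 0).trans (div_nonneg hR.le hp.le))
      (by rw [div_le_one hp]; exact hRp)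
  have hb : Real.sin (Real.arcsin (r / p)) = r / p :=
    Real.sin_arcsin ((by norm_num : (-1:ℝ) ≤ 0).trans (div_nonneg (by linarith) hp.le)) (by rw [div_le_one hp]; exact hrp)
  have hca : Real.cos (Real.arcsin (R / p)) = Real.sqrt (p ^ 2 - R ^ 2) / p := by
    rw [Real.cos_arcsin, show 1 - (R / p) ^ 2 = (p ^ 2 - R ^ 2) / p ^ 2 by field_simp,
      Real.sqrt_div hsR, Real.sqrt_sq hp.le]
  have hcb : Real.cos (Real.arcsin (r / p)) = Real.sqrt (p ^ 2 - r ^ 2) / p := by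
    rw [Real.cos_arcsin, show 1 - (r / p) ^ 2 = (p ^ 2 - r ^ 2) / p ^ 2 by field_simp,
      Real.sqrt_div hsr, Real.sqrt_sq hp.le]
  have ht : Real.sqrt (p ^ 2 - r ^ 2) = Real.sqrt (p + r) * Real.sqrt (p - r) := by
    rw [← Real.sqrt_mul hpr.le]; ring_nf
  have hspr : (0:ℝ) < Real.sqrt (p + r) := Real.sqrt_pos.2 hpr
  rw [Finset.mul_sum]
  refine Finset.sum_congr rfl fun σ hσ => ?_
  have hσ' : σ = -1 ∨ σ = 1 := by simpa using hσ
  have hcos : Real.cos (Real.arcsin (R / p) - σ * Real.arcsin (r / p))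
      = Q3 R p r * Real.sqrt (p - r) + σ * Q4 R p r := by
    rcases hσ' with h | h <;> subst h <;>
      simp only [neg_one_mul, one_mul, sub_neg_eq_add, Real.cos_add, Real.cos_sub] <;>
      rw [ha, hb, hca, hcb, ht] <;> unfold Q3 Q4 <;> field_simp <;> ring
  have hsin : 2 * π / R * (p * r * Real.sin (Real.arcsin (r / p) - σ * Real.arcsin (R / p)) /
      Real.sqrt (p + r)) = Q1 R p r - σ * Q2 p r * Real.sqrt (p - r) := by
    rcases hσ' with h | h <;> subst h <;>
      simp only [neg_one_mul, one_mul, sub_neg_eq_add, Real.sin_add, Real.sin_sub] <;>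
      rw [ha, hb, hca, hcb, ht] <;> unfold Q1 Q2 <;> field_simp <;> ring
  rw [hcos, ← hsin]; ring
end
end

section
/- For every natural number l, the set N = {r ∈ [r_m, r_M) : K_l(r,r) = 0} of zeros of the kernel on the diagonal is finite, and every r₀ ∈ N is a simple zero of the diagonal map, i.e. the derivative of the function r ↦ K_l(r,r) at r₀ is nonzero. -/
noncomputable section
open Real MeasureTheory

/-!
On the diagonal `p = r` every `√(p - r)` vanishes, and the parity `P_l(-x) = (-1)^l P_l(x)` turns
`K_l(r, r)` into `2 Q1(r, r) P_l(R / r)` with `Q1(r, r) > 0` for `r > R`. So the zeros of the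
diagonal map correspond, via the involution `r ↦ R / r`, to roots of the nonzero polynomial `P_l`
in `(0, 1)`. There `P_l` has only simple roots: by the Legendre equation
`(x² - 1) P'' + 2x P' = l(l + 1) P`, a double root at a point with `x² ≠ 1` would force `P''` to
vanish to higher order than `P'` allows. The chain rule then gives a nonzero derivative.
-/

open Polynomial
open scoped Nat

namespace Polynomial

section CommRing

variable {R : Type*} [CommRing R]

theorem iterate_derivative_comp_neg_X (p : R[X]) (k : ℕ) :
    derivative^[k] (p.comp (-X)) = (-1) ^ k * (derivative^[k] p).comp (-X) := by
  induction k generalizing p with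
  | zero => simp
  | succ k ih => simp [ih (derivative p), derivative_comp, pow_succ]

theorem iterate_derivative_X_mul (p : R[X]) (n : ℕ) :
    derivative^[n + 1] (X * p)
      = X * derivative^[n + 1] p + ((n : R[X]) + 1) * derivative^[n] p := by
  induction n with
  | zero => simp [derivative_mul, add_comm]
  | succ n ih =>
    rw [Function.iterate_succ_apply', ih, Function.iterate_succ_apply' _ (n + 1)]
    simp only [derivative_add, derivative_mul, derivative_X, derivative_natCast, derivative_one,
      Function.iterate_succ_apply']
    push_cast
    ring

theorem iterate_derivative_X_sq_sub_one_mul (p : R[X]) (n : ℕ) :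
    derivative^[n + 2] ((X ^ 2 - 1) * p) = (X ^ 2 - 1) * derivative^[n + 2] p
      + 2 * ((n : R[X]) + 2) * X * derivative^[n + 1] p
      + ((n : R[X]) + 2) * ((n : R[X]) + 1) * derivative^[n] p := by
  rw [show (X ^ 2 - 1) * p = X * (X * p) - p by ring, iterate_derivative_sub,
    iterate_derivative_X_mul, iterate_derivative_X_mul, iterate_derivative_X_mul]
  push_cast
  ring

theorem iterate_derivative_X_sq_sub_one_pow_ode (l : ℕ) :
    (X ^ 2 - 1) * derivative (derivative (derivative^[l] ((X ^ 2 - 1 : R[X]) ^ l)))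
      + 2 * X * derivative (derivative^[l] ((X ^ 2 - 1 : R[X]) ^ l))
      = (l : R[X]) * ((l : R[X]) + 1) * derivative^[l] ((X ^ 2 - 1 : R[X]) ^ l) := by
  have hu : derivative ((X ^ 2 - 1) * (X ^ 2 - 1) ^ l)
      = C (2 * ((l : R) + 1)) * (X * (X ^ 2 - 1 : R[X]) ^ l) := by
    rw [← _root_.pow_succ', derivative_pow]
    simp only [derivative_sub, derivative_X_pow, derivative_one]
    simp
    ring
  have h := congrArg (derivative^[l + 1]) hu
  rw [← Function.iterate_succ_apply, iterate_derivative_C_mul,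
    iterate_derivative_X_sq_sub_one_mul, iterate_derivative_X_mul] at h
  rw [← Function.iterate_succ_apply' derivative, ← Function.iterate_succ_apply' derivative]
  simp only [C_mul, C_add, C_1, map_natCast, map_ofNat] at h
  linear_combination h

end CommRing

section Field

variable {K : Type*} [Field K] [CharZero K]

theorem derivative_ne_zero_of_isRoot {p : K[X]} {x : K} (hp : p ≠ 0) (hx : p.IsRoot x) :
    derivative p ≠ 0 := by
  intro h
  rw [eq_C_of_derivative_eq_zero h] at hp hx
  exact not_isRoot_C _ _ (C_ne_zero.mp hp) hx

theorem not_isRoot_derivative_of_ode {p a b c : K[X]} {x : K} (hp : p ≠ 0)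
    (hode : a * derivative (derivative p) + b * derivative p = c * p) (ha : ¬ a.IsRoot x)
    (hx : p.IsRoot x) : ¬ (derivative p).IsRoot x := by
  intro hx'
  have hp' := derivative_ne_zero_of_isRoot hp hx
  have hp'' := derivative_ne_zero_of_isRoot hp' hx'
  set k := p.rootMultiplicity x
  have hk : 1 < k := (one_lt_rootMultiplicity_iff_isRoot hp).2 ⟨hx, hx'⟩
  have hk' : (derivative p).rootMultiplicity x = k - 1 := derivative_rootMultiplicity_of_root hx
  have hk'' : (derivative (derivative p)).rootMultiplicity x = k - 2 := by
    rw [derivative_rootMultiplicity_of_root hx', hk']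
    omega
  -- by the equation `p''` vanishes to order `k - 1` at `x`, but its multiplicity there is `k - 2`
  have hdvd : (X - C x) ^ (k - 1) ∣ a * derivative (derivative p) := by
    rw [eq_sub_of_add_eq hode]
    refine (Dvd.dvd.mul_left ?_ c).sub (Dvd.dvd.mul_left ?_ b)
    · exact (pow_dvd_pow _ (Nat.sub_le k 1)).trans (pow_rootMultiplicity_dvd p x)
    · exact hk' ▸ pow_rootMultiplicity_dvd (derivative p) x
  have := (le_rootMultiplicity_iff hp'').2 <|
    (prime_X_sub_C x).pow_dvd_of_dvd_mul_left _ (by rwa [dvd_iff_isRoot]) hdvd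
  omega

end Field

variable (K : Type*) [Field K]

def legendre (l : ℕ) : K[X] :=
  C (1 / (2 ^ l * l ! : K)) * derivative^[l] ((X ^ 2 - 1) ^ l)

theorem legendre_ode (l : ℕ) :
    (X ^ 2 - 1) * derivative (derivative (legendre K l)) + 2 * X * derivative (legendre K l)
      = (l : K[X]) * ((l : K[X]) + 1) * legendre K l := by
  simp only [legendre, derivative_C_mul]
  linear_combination
    C (1 / (2 ^ l * l ! : K)) * iterate_derivative_X_sq_sub_one_pow_ode (R := K) l

theorem legendre_comp_neg_X (l : ℕ) : (legendre K l).comp (-X) = (-1) ^ l * legendre K l := by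
  have heven : ((X ^ 2 - 1 : K[X]) ^ l).comp (-X) = (X ^ 2 - 1) ^ l := by simp
  have h := iterate_derivative_comp_neg_X ((X ^ 2 - 1 : K[X]) ^ l) l
  rw [heven] at h
  have hsq : ((-1 : K[X]) ^ l) ^ 2 = 1 := by
    rw [← pow_mul, mul_comm, pow_mul, neg_one_sq, one_pow]
  rw [legendre, mul_comp, C_comp]
  linear_combination (-(-1) ^ l * C (1 / (2 ^ l * l ! : K))) * h
    - C (1 / (2 ^ l * l ! : K)) * ((derivative^[l] ((X ^ 2 - 1 : K[X]) ^ l)).comp (-X)) * hsq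

theorem legendre_ne_zero [CharZero K] (l : ℕ) : legendre K l ≠ 0 := by
  have hmonic : ((X ^ 2 - 1 : K[X]) ^ l).Monic := by
    simpa using (monic_X_pow_sub_C (1 : K) two_ne_zero).pow l
  have hdeg : ((X ^ 2 - 1 : K[X]) ^ l).natDegree = l + l := by
    rw [natDegree_pow, ← C_1, natDegree_X_pow_sub_C, mul_two]
  have hcoeff : (derivative^[l] ((X ^ 2 - 1 : K[X]) ^ l)).coeff l
      = ((l + l).descFactorial l : K) := by
    rw [coeff_iterate_derivative, ← hdeg, hmonic.coeff_natDegree, nsmul_one]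
  refine mul_ne_zero (by simp [Nat.factorial_ne_zero]) fun h => ?_
  rw [h, coeff_zero, eq_comm, Nat.cast_eq_zero, Nat.descFactorial_eq_zero_iff_lt] at hcoeff
  omega

theorem not_isRoot_derivative_legendre [CharZero K] {l : ℕ} {x : K} (hx : x ^ 2 ≠ 1)
    (h : (legendre K l).IsRoot x) : ¬ (derivative (legendre K l)).IsRoot x :=
  not_isRoot_derivative_of_ode (legendre_ne_zero K l) (legendre_ode K l)
    (by simpa [sub_eq_zero] using hx) h

theorem iteratedDeriv_eval {𝕜 : Type*} [NontriviallyNormedField 𝕜] (p : 𝕜[X]) (n : ℕ) :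
    iteratedDeriv n (fun x => p.eval x) = fun x => (derivative^[n] p).eval x := by
  induction n with
  | zero => simp
  | succ n ih =>
    rw [iteratedDeriv_succ, ih, Function.iterate_succ_apply']
    ext x
    exact Polynomial.deriv _

end Polynomial

theorem legP_eq_eval_legendre (l : ℕ) (x : ℝ) : legP l x = (legendre ℝ l).eval x := by
  have h : (fun y : ℝ => (y ^ 2 - 1) ^ l) = fun y => ((X ^ 2 - 1 : ℝ[X]) ^ l).eval y := by
    simp
  rw [legP, legendre, h, iteratedDeriv_eval, eval_mul, eval_C]

theorem Kalg_self (R : ℝ) (l : ℕ) (r : ℝ) :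
    Kalg R l r r = 2 * Q1 R r r * (legendre ℝ l).eval (R / r) := by
  have hQ4 : Q4 R r r = R / r := by
    rcases eq_or_ne r 0 with rfl | hr
    · simp [Q4]
    · rw [Q4, sq, ← div_div, mul_div_cancel_right₀ _ hr]
  have hneg : (legendre ℝ l).eval (-(R / r)) = (-1) ^ l * (legendre ℝ l).eval (R / r) := by
    simpa using congrArg (eval (R / r)) (legendre_comp_neg_X ℝ l)
  rw [Kalg, Finset.sum_pair (by norm_num)]
  simp only [sub_self, Real.sqrt_zero, mul_zero, zero_add, sub_zero, legP_eq_eval_legendre, hQ4,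
    one_pow, one_mul, neg_one_mul, hneg]
  have hsq : (-1 : ℝ) ^ l * (-1) ^ l = 1 := by rw [← mul_pow]; norm_num
  linear_combination Q1 R r r * (legendre ℝ l).eval (R / r) * hsq

section Diagonal

variable {R r : ℝ} {l : ℕ}

theorem Q1_self_pos (hR : 0 < R) (hRr : R < r) : 0 < Q1 R r r := by
  have hr : 0 < r := hR.trans hRr
  have h₁ : 0 < √(r ^ 2 - R ^ 2) := Real.sqrt_pos.2 (by nlinarith)
  have h₂ : 0 < √(r + r) := Real.sqrt_pos.2 (by linarith)
  unfold Q1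
  positivity

theorem differentiableAt_Q1_self (hR : 0 < R) (hRr : R < r) :
    DifferentiableAt ℝ (fun r => Q1 R r r) r := by
  have hr : 0 < r := hR.trans hRr
  have h₁ : DifferentiableAt ℝ (fun r : ℝ => √(r ^ 2 - R ^ 2)) r :=
    DifferentiableAt.sqrt (by fun_prop) (by nlinarith)
  have h₂ : DifferentiableAt ℝ (fun r : ℝ => √(r + r)) r :=
    DifferentiableAt.sqrt (by fun_prop) (by linarith)
  have h₃ : R * r * √(r + r) ≠ 0 := by
    have := Real.sqrt_pos.2 (show 0 < r + r by linarith)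
    positivity
  unfold Q1
  fun_prop (disch := assumption)

theorem Kalg_self_eq_zero_iff (hR : 0 < R) (hRr : R < r) :
    Kalg R l r r = 0 ↔ (legendre ℝ l).IsRoot (R / r) := by
  rw [Kalg_self, mul_eq_zero, IsRoot.def, or_iff_right]
  exact mul_ne_zero two_ne_zero (Q1_self_pos hR hRr).ne'

theorem deriv_Kalg_self_ne_zero (hR : 0 < R) (hRr : R < r)
    (hroot : (legendre ℝ l).IsRoot (R / r)) :
    deriv (fun r => Kalg R l r r) r ≠ 0 := by
  have hr : 0 < r := hR.trans hRr
  have hx : (R / r) ^ 2 ≠ 1 := by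
    have : R / r < 1 := (div_lt_one hr).2 hRr
    have : 0 < R / r := div_pos hR hr
    nlinarith
  have hP : HasDerivAt (fun r => (legendre ℝ l).eval (R / r))
      ((derivative (legendre ℝ l)).eval (R / r) * (-R / r ^ 2)) r := by
    have hdiv : HasDerivAt (fun r => R / r) (-R / r ^ 2) r := by
      simpa [div_eq_mul_inv, neg_div] using (hasDerivAt_inv hr.ne').const_mul R
    exact ((legendre ℝ l).hasDerivAt (R / r)).comp r hdiv
  simp only [Kalg_self]
  rw [deriv_fun_mul ((differentiableAt_Q1_self hR hRr).const_mul 2) hP.differentiableAt, hP.deriv,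
    hroot.eq_zero, mul_zero, zero_add]
  exact mul_ne_zero (mul_ne_zero two_ne_zero (Q1_self_pos hR hRr).ne')
    (mul_ne_zero (not_isRoot_derivative_legendre ℝ hx hroot)
      (div_ne_zero (neg_ne_zero.2 hR.ne') (pow_ne_zero 2 hr.ne')))

end Diagonal

theorem kernel_diagonal_zeros_finite_simple_general
    (R rm rM : ℝ) (hR : 0 < R) (hRm : R < rm) (l : ℕ) :
    {r ∈ Set.Ico rm rM | Kalg R l r r = 0}.Finite ∧
      ∀ r₀ ∈ {r ∈ Set.Ico rm rM | Kalg R l r r = 0},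
        deriv (fun r => Kalg R l r r) r₀ ≠ 0 := by
  have hroot : ∀ r ∈ {r ∈ Set.Ico rm rM | Kalg R l r r = 0},
      R < r ∧ (legendre ℝ l).IsRoot (R / r) := fun r ⟨hr, hK⟩ =>
    ⟨hRm.trans_le hr.1, (Kalg_self_eq_zero_iff hR (hRm.trans_le hr.1)).1 hK⟩
  refine ⟨?_, fun r₀ hr₀ => (hroot r₀ hr₀).elim (deriv_Kalg_self_ne_zero hR)⟩
  -- `r ↦ R / r` is an involution, so every zero is the image of a root of `legendre ℝ l`
  refine ((finite_setOfPred_isRoot (legendre_ne_zero ℝ l)).image (R / ·)).subset fun r hr => ?_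
  exact ⟨R / r, (hroot r hr).2, div_div_cancel₀ hR.ne'⟩

/-- The set of zeros of the kernel on the diagonal over `[r_m, r_M)` is finite and
each such zero is a simple zero of the diagonal map `r ↦ K_l(r, r)`. -/
theorem kernel_diagonal_zeros_finite_simple
    (R rm rM : ℝ) (hR : 0 < R) (hRm : R < rm) (hmM : rm < rM) (l : ℕ) :
    {r ∈ Set.Ico rm rM | Kalg R l r r = 0}.Finite ∧
      ∀ r₀ ∈ {r ∈ Set.Ico rm rM | Kalg R l r r = 0},
        deriv (fun r => Kalg R l r r) r₀ ≠ 0 :=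
  kernel_diagonal_zeros_finite_simple_general R rm rM hR hRm l
end
end

section
/- For every natural number l, define the truncated kernel K̄_l(p,r) = 2 Q1(p,r) P_l(Q4(p,r)) + 2(p − r) · [(1/2) Q3(p,r)² Q1(p,r) P_l''(Q4(p,r)) − Q3(p,r) Q2(p,r) P_l'(Q4(p,r))]. Then there exists a constant C > 0 such that |K_l(p,r) − K̄_l(p,r)| ≤ C (p − r)² for all (p,r) with r_m ≤ r ≤ p ≤ r_M; in particular K_l and K̄_l agree to second order on the diagonal. -/
noncomputable section
open Real MeasureTheory

/-- The truncated kernel `K̄_l`. -/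
def Kbar (R : ℝ) (l : ℕ) (p r : ℝ) : ℝ :=
  2 * Q1 R p r * legP l (Q4 R p r) +
    2 * (p - r) *
      ((1 / 2) * (Q3 R p r) ^ 2 * Q1 R p r * deriv (deriv (legP l)) (Q4 R p r) -
        Q3 R p r * Q2 p r * deriv (legP l) (Q4 R p r))

/-- The polynomial representing `legP l`. -/
def legPoly (l : ℕ) : Polynomial ℝ :=
  Polynomial.C (1 / (2 ^ l * Nat.factorial l : ℝ)) *
    (Polynomial.derivative^[l] ((Polynomial.X ^ 2 - 1) ^ l))

lemma iteratedDeriv_polyEval (f : Polynomial ℝ) (n : ℕ) :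
    iteratedDeriv n (fun x => f.eval x) = fun x => (Polynomial.derivative^[n] f).eval x := by
  induction n with
  | zero => simp
  | succ n ih =>
      funext x
      rw [iteratedDeriv_succ, ih, Function.iterate_succ_apply']
      exact Polynomial.deriv (p := Polynomial.derivative^[n] f)

lemma legP_eq (l : ℕ) : legP l = fun x => (legPoly l).eval x := by
  funext x
  have h : (fun y : ℝ => (y ^ 2 - 1) ^ l)
      = fun y : ℝ => (((Polynomial.X : Polynomial ℝ) ^ 2 - 1) ^ l).eval y := by
    funext y; simp
  simp only [legP, legPoly, h, iteratedDeriv_polyEval, Polynomial.eval_mul, Polynomial.eval_C]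

lemma legP_eq' (l : ℕ) (x : ℝ) : legP l x = (legPoly l).eval x := by rw [legP_eq]

lemma deriv_legP (l : ℕ) :
    deriv (legP l) = fun x => ((legPoly l).derivative).eval x := by
  rw [legP_eq]; funext x; exact Polynomial.deriv (p := legPoly l)

lemma deriv_legP' (l : ℕ) (x : ℝ) :
    deriv (legP l) x = ((legPoly l).derivative).eval x := by rw [deriv_legP]

lemma deriv2_legP' (l : ℕ) (x : ℝ) :
    deriv (deriv (legP l)) x = ((legPoly l).derivative.derivative).eval x := by
  rw [deriv_legP]; exact Polynomial.deriv (p := (legPoly l).derivative)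

lemma key_expand (f : Polynomial ℝ) (a b c d s : ℝ) :
    (a - b*s) * f.eval (c*s + d) + (a + b*s) * f.eval (d - c*s)
      = 2*a*f.eval d
        + 2*s^2*((1/2)*c^2*a*(f.derivative.derivative.eval d) - c*b*(f.derivative.eval d))
        + s^4 * ∑ i ∈ Finset.range f.natDegree,
            (Polynomial.hasseDeriv (3+i) f).eval d *
              (if Even (3+i) then 2*a*s^(3+i-4) else -(2*b)*s^(3+i-3)) * c^(3+i) := by
  set T := Polynomial.taylor d f with hT
  have h1 : f.eval (c*s + d) = T.eval (c*s) := (Polynomial.taylor_eval d f (c*s)).symm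
  have h2 : f.eval (d - c*s) = T.eval (-(c*s)) := by
    rw [hT, Polynomial.taylor_eval]; congr 1; ring
  have hdeg : T.natDegree < f.natDegree + 3 := by
    rw [hT, Polynomial.natDegree_taylor]; omega
  have h3 : ∀ x : ℝ, T.eval x = ∑ k ∈ Finset.range (f.natDegree + 3), T.coeff k * x ^ k :=
    fun x => Polynomial.eval_eq_sum_range' hdeg x
  have hL : (a - b*s) * f.eval (c*s + d) + (a + b*s) * f.eval (d - c*s)
      = ∑ k ∈ Finset.range (f.natDegree + 3),
          T.coeff k * ((a - b*s) * (c*s)^k + (a + b*s) * (-(c*s))^k) := by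
    rw [h1, h2, h3, h3, Finset.mul_sum, Finset.mul_sum, ← Finset.sum_add_distrib]
    exact Finset.sum_congr rfl fun k _ => by ring
  rw [hL]
  rw [show f.natDegree + 3 = f.natDegree + 2 + 1 from rfl, Finset.sum_range_succ',
    Finset.sum_range_succ', Finset.sum_range_succ']
  have hc0 : T.coeff 0 = f.eval d := Polynomial.taylor_coeff_zero d f
  have hc1 : T.coeff 1 = f.derivative.eval d := Polynomial.taylor_coeff_one d f
  have hc2 : f.derivative.derivative.eval d = 2 * T.coeff 2 := by
    rw [hT, Polynomial.taylor_coeff]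
    have h4 := congrFun (Polynomial.factorial_smul_hasseDeriv (R := ℝ) 2) f
    simp only [LinearMap.smul_apply] at h4
    have h5 : Polynomial.derivative^[2] f = f.derivative.derivative := by
      rw [Function.iterate_succ_apply', Function.iterate_succ_apply', Function.iterate_zero_apply]
    rw [← h5, ← h4, show Nat.factorial 2 = 2 from rfl, two_smul, Polynomial.eval_add]
    ring
  have hterm : ∀ i ∈ Finset.range f.natDegree,
      T.coeff (i+1+1+1) * ((a - b*s) * (c*s)^(i+1+1+1) + (a + b*s) * (-(c*s))^(i+1+1+1))
      = s^4 * ((Polynomial.hasseDeriv (3+i) f).eval d *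
          (if Even (3+i) then 2*a*s^(3+i-4) else -(2*b)*s^(3+i-3)) * c^(3+i)) := by
    intro i _
    have hidx : i+1+1+1 = 3+i := by omega
    rw [hidx, hT, Polynomial.taylor_coeff, mul_pow]
    rcases Nat.even_or_odd (3+i) with he | ho
    · rw [if_pos he, he.neg_pow, mul_pow]
      have hi1 : 1 ≤ i := by
        by_contra h
        interval_cases i
        · exact (by decide : ¬ Even 3) (by simpa using he)
      have hs : s^(3+i) = s^4 * s^(3+i-4) := by
        rw [← pow_add]; congr 1; omega
      rw [hs]; ring
    · rw [if_neg (Nat.not_even_iff_odd.mpr ho), ho.neg_pow, mul_pow]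
      have hs : s^(3+i) * s = s^4 * s^(3+i-3) := by
        rw [← pow_succ, ← pow_add]; congr 1; omega
      linear_combination (-(2*b) * (Polynomial.hasseDeriv (3+i) f).eval d * c^(3+i)) * hs
  rw [Finset.sum_congr rfl hterm, ← Finset.mul_sum]
  simp only [pow_zero, pow_one, pow_succ, pow_zero, one_mul]
  rw [hc0, hc1, hc2]
  norm_num
  ring

/-- The second-order remainder coefficient. -/
def Gfun (R : ℝ) (l : ℕ) (x : ℝ × ℝ) : ℝ :=
  ∑ i ∈ Finset.range (legPoly l).natDegree,
    (Polynomial.hasseDeriv (3+i) (legPoly l)).eval (Q4 R x.1 x.2) *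
      (if Even (3+i) then 2*(Q1 R x.1 x.2)*(Real.sqrt (x.1 - x.2))^(3+i-4)
       else -(2*(Q2 x.1 x.2))*(Real.sqrt (x.1 - x.2))^(3+i-3)) * (Q3 R x.1 x.2)^(3+i)

/-- `K_l` and the truncated kernel `K̄_l` agree to second order on the diagonal. -/
theorem kernel_truncation_second_order
    (R rm rM : ℝ) (hR : 0 < R) (hRm : R < rm) (hmM : rm < rM) (l : ℕ) :
    ∃ C > 0, ∀ p r : ℝ, rm ≤ r → r ≤ p → p ≤ rM →
      |Kalg R l p r - Kbar R l p r| ≤ C * (p - r) ^ 2 := by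
  have hrm : (0:ℝ) < rm := hR.trans hRm
  set Kset : Set (ℝ × ℝ) := Set.Icc rm rM ×ˢ Set.Icc rm rM with hKset
  have hKc : IsCompact Kset := isCompact_Icc.prod isCompact_Icc
  have hp1 : ∀ x ∈ Kset, (0:ℝ) < x.1 := fun x hx => lt_of_lt_of_le hrm hx.1.1
  have hp2 : ∀ x ∈ Kset, (0:ℝ) < x.2 := fun x hx => lt_of_lt_of_le hrm hx.2.1
  have hQ4 : ContinuousOn (fun x : ℝ × ℝ => Q4 R x.1 x.2) Kset := by
    unfold Q4
    exact (continuous_const.mul continuous_snd).continuousOn.div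
      ((continuous_fst.pow 2).continuousOn)
      (fun x hx => pow_ne_zero 2 (hp1 x hx).ne')
  have hQ1 : ContinuousOn (fun x : ℝ × ℝ => Q1 R x.1 x.2) Kset := by
    unfold Q1
    apply ContinuousOn.div
    · exact ((continuous_const.mul (continuous_snd.pow 2)).mul
        (Real.continuous_sqrt.comp ((continuous_fst.pow 2).sub continuous_const))).continuousOn
    · exact ((continuous_const.mul continuous_fst).mul
        (Real.continuous_sqrt.comp (continuous_fst.add continuous_snd))).continuousOn
    · intro x hx
      refine mul_ne_zero (mul_ne_zero hR.ne' (hp1 x hx).ne') ?_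
      exact (Real.sqrt_pos.mpr (by linarith [hp1 x hx, hp2 x hx])).ne'
  have hQ2 : ContinuousOn (fun x : ℝ × ℝ => Q2 x.1 x.2) Kset := by
    unfold Q2
    exact (continuous_const.mul continuous_snd).continuousOn.div
      continuous_fst.continuousOn (fun x hx => (hp1 x hx).ne')
  have hQ3 : ContinuousOn (fun x : ℝ × ℝ => Q3 R x.1 x.2) Kset := by
    unfold Q3
    exact ((Real.continuous_sqrt.comp ((continuous_fst.pow 2).sub continuous_const)).mul
      (Real.continuous_sqrt.comp (continuous_fst.add continuous_snd))).continuousOn.div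
      ((continuous_fst.pow 2).continuousOn)
      (fun x hx => pow_ne_zero 2 (hp1 x hx).ne')
  have hsq : Continuous (fun x : ℝ × ℝ => Real.sqrt (x.1 - x.2)) :=
    Real.continuous_sqrt.comp (continuous_fst.sub continuous_snd)
  have hGc : ContinuousOn (Gfun R l) Kset := by
    unfold Gfun
    apply continuousOn_finset_sum
    intro i _
    apply ContinuousOn.mul
    · apply ContinuousOn.mul
      · exact ((Polynomial.hasseDeriv (3+i) (legPoly l)).continuous).comp_continuousOn hQ4
      · by_cases he : Even (3+i)
        · simp only [if_pos he]
          exact (continuousOn_const.mul hQ1).mul (hsq.continuousOn.pow _)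
        · simp only [if_neg he]
          exact (continuousOn_const.mul hQ2).neg.mul (hsq.continuousOn.pow _)
    · exact hQ3.pow _
  obtain ⟨M, hM⟩ := hKc.exists_bound_of_continuousOn hGc
  refine ⟨max M 0 + 1, by positivity, ?_⟩
  intro p r h1 h2 h3
  have hx : (p, r) ∈ Kset := by
    refine ⟨⟨le_trans h1 h2, h3⟩, ⟨h1, le_trans h2 h3⟩⟩
  have hs2 : Real.sqrt (p - r) ^ 2 = p - r := Real.sq_sqrt (sub_nonneg.mpr h2)
  have hone : ((-1 : ℝ) ^ l) * ((-1 : ℝ) ^ l) = 1 := by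
    rw [← pow_add, ← two_mul, pow_mul]; norm_num
  have hpar : (legPoly l).eval (Q3 R p r * Real.sqrt (p - r) + (-1) * Q4 R p r)
      = (-1 : ℝ) ^ l * (legPoly l).eval (Q4 R p r - Q3 R p r * Real.sqrt (p - r)) := by
    have h := legP_neg l (Q4 R p r - Q3 R p r * Real.sqrt (p - r))
    rw [legP_eq', legP_eq'] at h
    rw [show Q3 R p r * Real.sqrt (p - r) + (-1) * Q4 R p r
        = -(Q4 R p r - Q3 R p r * Real.sqrt (p - r)) by ring]
    exact h
  have hid : Kalg R l p r - Kbar R l p r = (p - r) ^ 2 * Gfun R l (p, r) := by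
    have hkey := key_expand (legPoly l) (Q1 R p r) (Q2 p r) (Q3 R p r) (Q4 R p r)
      (Real.sqrt (p - r))
    have hs4 : Real.sqrt (p - r) ^ 4 = (p - r) ^ 2 := by
      rw [show (4:ℕ) = 2*2 from rfl, pow_mul, hs2]
    rw [hs4, hs2] at hkey
    unfold Kalg Kbar Gfun
    rw [Finset.sum_pair (by norm_num : (-1:ℝ) ≠ 1)]
    simp only [deriv2_legP', deriv_legP', legP_eq', one_pow, one_mul]
    rw [hpar]
    linear_combination hkey + ((Q1 R p r + Q2 p r * Real.sqrt (p - r)) *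
      (legPoly l).eval (Q4 R p r - Q3 R p r * Real.sqrt (p - r))) * hone
  rw [hid, abs_mul, abs_of_nonneg (sq_nonneg (p - r))]
  have hGb : |Gfun R l (p, r)| ≤ max M 0 + 1 := by
    have := hM (p, r) hx
    rw [Real.norm_eq_abs] at this
    calc |Gfun R l (p, r)| ≤ M := this
      _ ≤ max M 0 := le_max_left _ _
      _ ≤ max M 0 + 1 := by linarith
  calc (p - r) ^ 2 * |Gfun R l (p, r)| ≤ (p - r) ^ 2 * (max M 0 + 1) :=
        mul_le_mul_of_nonneg_left hGb (sq_nonneg _)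
    _ = (max M 0 + 1) * (p - r) ^ 2 := mul_comm _ _
end
end
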